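/- arXiv:2602.17104 — 3 statements merged into one kernel-verified Lean document; each statement's English description precedes it below -/
import Mathlib

section
/- Let n ≥ 1 and 0 ≤ k ≤ n be integers. For every nonincreasing sequence of reals x₁ ≥ x₂ ≥ ... ≥ x_{2n} with Σ_{i=1}^{2n} x_i² ≤ 1, one has (1/√(2n))·(Σ_{i=1}^{n−k} x_i − Σ_{i=n−k+1}^{n} x_i + Σ_{i=n+1}^{n+k} x_i − Σ_{i=n+k+1}^{2n} x_i) ≤ √(1 − k/n). Consequently the bound γ = sin²θ in the extremal analysis is sharp: no sorted unit vector misclassifying k vertices on each side can achieve cos θ larger than √(1 − k/n). -/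
/-- Sharpness of the extremal bound: for any nonincreasing reals `x₁ ≥ ⋯ ≥ x_{2n}` with
`∑ x_i² ≤ 1`, the normalized signed sum corresponding to `k` misclassified vertices on each
side is at most `√(1 - k/n)`. -/
theorem sorted_unit_vector_cos_le (n k : ℕ) (hn : 1 ≤ n) (hk : k ≤ n)
    (x : ℕ → ℝ) (hx : ∀ i j : ℕ, 1 ≤ i → i ≤ j → j ≤ 2*n → x j ≤ x i)
    (hnorm : ∑ i ∈ Finset.Icc 1 (2*n), (x i)^2 ≤ 1) :
    (1 / Real.sqrt (2*n)) *
        (∑ i ∈ Finset.Icc 1 (n-k), x i - ∑ i ∈ Finset.Icc (n-k+1) n, x i +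
          ∑ i ∈ Finset.Icc (n+1) (n+k), x i - ∑ i ∈ Finset.Icc (n+k+1) (2*n), x i) ≤
      Real.sqrt (1 - (k : ℝ) / n) := by
  have hn0 : (0:ℝ) < n := by exact_mod_cast hn
  set A := Finset.Icc 1 (n-k) with hA
  set D := Finset.Icc (n+k+1) (2*n) with hD
  -- Step 1: middle sums compare
  have hmid : ∑ i ∈ Finset.Icc (n+1) (n+k), x i ≤ ∑ i ∈ Finset.Icc (n-k+1) n, x i := by
    rw [← Finset.Ico_add_one_right_eq_Icc, ← Finset.Ico_add_one_right_eq_Icc, Finset.sum_Ico_eq_sum_range,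
      Finset.sum_Ico_eq_sum_range]
    rw [show n + k + 1 - (n+1) = k by omega, show n + 1 - (n - k + 1) = k by omega]
    apply Finset.sum_le_sum
    intro j hj
    rw [Finset.mem_range] at hj
    exact hx (n - k + 1 + j) (n + 1 + j) (by omega) (by omega) (by omega)
  -- Step 2: Cauchy-Schwarz on A ∪ D
  have hdisj : Disjoint A D := by
    rw [Finset.disjoint_left]
    intro a ha hb
    rw [hA, Finset.mem_Icc] at ha
    rw [hD, Finset.mem_Icc] at hb
    omega
  set g : ℕ → ℝ := fun i => if i ≤ n - k then x i else -(x i) with hg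
  have hT : ∑ i ∈ A ∪ D, g i = ∑ i ∈ A, x i - ∑ i ∈ D, x i := by
    rw [Finset.sum_union hdisj]
    have h1 : ∑ i ∈ A, g i = ∑ i ∈ A, x i := by
      apply Finset.sum_congr rfl
      intro i hi
      rw [hA, Finset.mem_Icc] at hi
      simp [hg, hi.2]
    have h2 : ∑ i ∈ D, g i = ∑ i ∈ D, -(x i) := by
      apply Finset.sum_congr rfl
      intro i hi
      rw [hD, Finset.mem_Icc] at hi
      have : ¬ (i ≤ n - k) := by omega
      simp [hg, this]
    rw [h1, h2, Finset.sum_neg_distrib]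
    ring
  have hcard : (A ∪ D).card = 2*(n-k) := by
    rw [Finset.card_union_of_disjoint hdisj, hA, hD, Nat.card_Icc, Nat.card_Icc]
    omega
  have hsub : A ∪ D ⊆ Finset.Icc 1 (2*n) := by
    intro i hi
    rw [Finset.mem_union, hA, hD, Finset.mem_Icc, Finset.mem_Icc] at hi
    rw [Finset.mem_Icc]
    omega
  have hsq : ∑ i ∈ A ∪ D, (g i)^2 ≤ 1 := by
    have : ∑ i ∈ A ∪ D, (g i)^2 = ∑ i ∈ A ∪ D, (x i)^2 := by
      apply Finset.sum_congr rfl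
      intro i _
      by_cases h : i ≤ n - k <;> simp [hg, h]
    rw [this]
    refine le_trans (Finset.sum_le_sum_of_subset_of_nonneg hsub ?_) hnorm
    intro i _ _
    positivity
  set c : ℝ := 2*((n:ℝ) - k) with hc
  have hc0 : 0 ≤ c := by
    have : (k:ℝ) ≤ n := by exact_mod_cast hk
    rw [hc]; linarith
  have hCS : (∑ i ∈ A ∪ D, g i)^2 ≤ c := by
    have h := Finset.sum_mul_sq_le_sq_mul_sq (A ∪ D) (fun _ => (1:ℝ)) g
    simp only [one_mul, one_pow] at h
    have hcardR : ∑ i ∈ A ∪ D, (1:ℝ) = c := by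
      rw [Finset.sum_const, nsmul_eq_mul, mul_one, hcard, hc]
      push_cast [Nat.cast_sub hk]
      ring
    calc (∑ i ∈ A ∪ D, g i)^2 ≤ (∑ _i ∈ A ∪ D, (1:ℝ)) * ∑ i ∈ A ∪ D, (g i)^2 := h
      _ ≤ c * 1 := by
          apply mul_le_mul (le_of_eq hcardR) hsq (Finset.sum_nonneg (fun i _ => by positivity))
          rw [hcardR] at *; exact hc0
      _ = c := mul_one c
  have hTle : ∑ i ∈ A, x i - ∑ i ∈ D, x i ≤ Real.sqrt c := by
    rw [← hT]
    calc ∑ i ∈ A ∪ D, g i ≤ |∑ i ∈ A ∪ D, g i| := le_abs_self _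
      _ = Real.sqrt ((∑ i ∈ A ∪ D, g i)^2) := (Real.sqrt_sq_eq_abs _).symm
      _ ≤ Real.sqrt c := Real.sqrt_le_sqrt hCS
  -- final combination
  have hfin : Real.sqrt (1 - (k:ℝ)/n) = Real.sqrt c / Real.sqrt (2*n) := by
    rw [← Real.sqrt_div hc0]
    congr 1
    rw [hc]
    field_simp
  have hpos : 0 ≤ 1 / Real.sqrt (2*(n:ℝ)) := by positivity
  calc (1 / Real.sqrt (2*n)) *
        (∑ i ∈ Finset.Icc 1 (n-k), x i - ∑ i ∈ Finset.Icc (n-k+1) n, x i +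
          ∑ i ∈ Finset.Icc (n+1) (n+k), x i - ∑ i ∈ Finset.Icc (n+k+1) (2*n), x i)
      ≤ (1 / Real.sqrt (2*n)) * (∑ i ∈ A, x i - ∑ i ∈ D, x i) := by
        apply mul_le_mul_of_nonneg_left _ hpos
        linarith
    _ ≤ (1 / Real.sqrt (2*n)) * Real.sqrt c := mul_le_mul_of_nonneg_left hTle hpos
    _ = Real.sqrt c / Real.sqrt (2*n) := by rw [one_div_mul_eq_div]
    _ = Real.sqrt (1 - (k:ℝ)/n) := hfin.symm
end

section
/- Let n be a natural number and 0 < p_b < p_a < 1, with q_a = 1−p_a, q_b = 1−p_b. Let Y₁ ~ Binomial(n, p_a), Y₂ ~ Binomial(n, p_b) and ε uniform on {−1, +1} be mutually independent, and set X = ε·(Y₁ − Y₂). Let t* = (1/2)·ln(p_a q_b/(q_a p_b)) and C = (1/2)·(√(p_a p_b)+√(q_a q_b))^{2n} + (1/2)·(√(q_a³p_b³/(p_a q_b)) + √(p_a³q_b³/(q_a p_b)) + q_a q_b + p_a p_b)^{n}. Then for every real s, P(X ≥ s) ≤ C·e^{−s t*}. -/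
/-!
Chernoff's method with the exponent `t* = ½ log (p_a q_b / (q_a p_b))`. Conditioning on the sign,
the moment generating function of `ε (Y₁ - Y₂)` at `t` is `½ M_a(t) M_b(-t) + ½ M_a(-t) M_b(t)`,
where `M_p(t) = (p eᵗ + q)ⁿ` is the binomial one and the products come from the independence of
`Y₁` and `Y₂`. Since `e^{2t*} = p_a q_b / (q_a p_b)`, the cross terms of
`(p_a e^{±t*} + q_a)(p_b e^{∓t*} + q_b)` become the square roots appearing in `C`.
-/

open MeasureTheory ProbabilityTheory
open scoped ENNReal

section Probability

variable {Ω : Type*} [MeasurableSpace Ω] {μ : Measure Ω}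

theorem measure_ge_le_exp_mul_lintegral_exp {X : Ω → ℝ} (hX : AEMeasurable X μ) {t : ℝ}
    (ht : 0 ≤ t) (s : ℝ) :
    μ {ω | s ≤ X ω} ≤
      ENNReal.ofReal (Real.exp (-(s * t))) * ∫⁻ ω, ENNReal.ofReal (Real.exp (t * X ω)) ∂μ := by
  have hsub : {ω | s ≤ X ω} ⊆
      {ω | ENNReal.ofReal (Real.exp (s * t)) ≤ ENNReal.ofReal (Real.exp (t * X ω))} :=
    fun ω hω => ENNReal.ofReal_le_ofReal <| Real.exp_le_exp.mpr <| by
      rw [mul_comm]; exact mul_le_mul_of_nonneg_left hω ht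
  calc μ {ω | s ≤ X ω}
      ≤ (∫⁻ ω, ENNReal.ofReal (Real.exp (t * X ω)) ∂μ) / ENNReal.ofReal (Real.exp (s * t)) :=
        (measure_mono hsub).trans <| meas_ge_le_lintegral_div (by fun_prop)
          (by simp [Real.exp_pos]) ENNReal.ofReal_ne_top
    _ = _ := by
      rw [div_eq_mul_inv, mul_comm, ← ENNReal.ofReal_inv_of_pos (Real.exp_pos _), Real.exp_neg]

theorem lintegral_comp_eq_tsum_mul_measure_preimage {α : Type*} [MeasurableSpace α] [Countable α]
    [MeasurableSingletonClass α] {Y : Ω → α} (hY : Measurable Y) (f : α → ℝ≥0∞) :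
    ∫⁻ ω, f (Y ω) ∂μ = ∑' i, f i * μ {ω | Y ω = i} := by
  rw [← lintegral_map (.of_discrete) hY, lintegral_countable']
  refine tsum_congr fun i => ?_
  rw [Measure.map_apply hY (measurableSet_singleton i)]
  rfl

theorem lintegral_exp_mul_of_binomial {Y : Ω → ℕ} (hY : Measurable Y) {n : ℕ} {p : ℝ}
    (hp0 : 0 ≤ p) (hp1 : p ≤ 1)
    (hlaw : ∀ i : ℕ, μ {ω | Y ω = i} =
      ENNReal.ofReal ((n.choose i : ℝ) * p ^ i * (1 - p) ^ (n - i))) (u : ℝ) :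
    ∫⁻ ω, ENNReal.ofReal (Real.exp (u * Y ω)) ∂μ =
      ENNReal.ofReal ((p * Real.exp u + (1 - p)) ^ n) := by
  rw [lintegral_comp_eq_tsum_mul_measure_preimage hY fun i => ENNReal.ofReal (Real.exp (u * i))]
  simp only [hlaw, ← ENNReal.ofReal_mul (Real.exp_pos _).le]
  rw [tsum_eq_sum (s := Finset.range (n + 1)) fun i hi => by
      rw [Nat.choose_eq_zero_of_lt (by simpa using hi)]; simp,
    ← ENNReal.ofReal_sum_of_nonneg fun i _ => by positivity, add_pow]
  refine congrArg ENNReal.ofReal (Finset.sum_congr rfl fun i _ => ?_)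
  rw [mul_pow, mul_comm u, Real.exp_nat_mul]
  ring

theorem lintegral_exp_mul_sub_of_indepFun {X₁ X₂ : Ω → ℝ} (hX₁ : Measurable X₁)
    (hX₂ : Measurable X₂) (hind : IndepFun X₁ X₂ μ) (t : ℝ) :
    ∫⁻ ω, ENNReal.ofReal (Real.exp (t * (X₁ ω - X₂ ω))) ∂μ =
      (∫⁻ ω, ENNReal.ofReal (Real.exp (t * X₁ ω)) ∂μ) *
        ∫⁻ ω, ENNReal.ofReal (Real.exp (-t * X₂ ω)) ∂μ := by
  have hmeas : Measurable fun x : ℝ => ENNReal.ofReal (Real.exp (t * x)) := by fun_prop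
  have hmeas' : Measurable fun x : ℝ => ENNReal.ofReal (Real.exp (-t * x)) := by fun_prop
  refine Eq.trans ?_ (lintegral_mul_eq_lintegral_mul_lintegral_of_indepFun'' (by fun_prop)
    (by fun_prop) (hind.comp hmeas hmeas'))
  refine lintegral_congr fun ω => ?_
  rw [← ENNReal.ofReal_mul (Real.exp_pos _).le, ← Real.exp_add]
  ring_nf

theorem lintegral_comp_sign_mul_of_indepFun {X ε : Ω → ℝ} (hX : Measurable X) (hε : Measurable ε)
    (hεval : ∀ ω, ε ω = 1 ∨ ε ω = -1) (hind : IndepFun X ε μ) {G : ℝ → ℝ≥0∞}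
    (hG : Measurable G) :
    ∫⁻ ω, G (ε ω * X ω) ∂μ =
      μ {ω | ε ω = 1} * ∫⁻ ω, G (X ω) ∂μ + μ {ω | ε ω = -1} * ∫⁻ ω, G (-X ω) ∂μ := by
  have hsplit : ∀ ω, G (ε ω * X ω) =
      ({1} : Set ℝ).indicator 1 (ε ω) * G (X ω) +
        ({-1} : Set ℝ).indicator 1 (ε ω) * G (-X ω) := by
    intro ω
    rcases hεval ω with h | h <;> norm_num [h]
  have hind_meas : ∀ a : ℝ, Measurable (({a} : Set ℝ).indicator (1 : ℝ → ℝ≥0∞)) := fun a =>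
    measurable_one.indicator (measurableSet_singleton a)
  have hind_sign : ∀ (a : ℝ) (F : ℝ → ℝ≥0∞), Measurable F →
      ∫⁻ ω, ({a} : Set ℝ).indicator 1 (ε ω) * F (X ω) ∂μ =
        μ {ω | ε ω = a} * ∫⁻ ω, F (X ω) ∂μ := by
    intro a F hF
    refine (lintegral_mul_eq_lintegral_mul_lintegral_of_indepFun''
      ((hind_meas a).comp hε).aemeasurable (hF.comp hX).aemeasurable
      (hind.symm.comp (hind_meas a) hF)).trans ?_
    congr 1
    exact lintegral_indicator_one (hε (measurableSet_singleton a))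
  simp only [hsplit]
  rw [lintegral_add_left (f := fun ω => ({1} : Set ℝ).indicator 1 (ε ω) * G (X ω))
    (((hind_meas 1).comp hε).mul (hG.comp hX)), hind_sign 1 G hG,
    hind_sign (-1) (fun x => G (-x)) (by fun_prop)]

theorem lintegral_exp_mul_sign_mul_sub_of_binomial {n : ℕ} {p_a p_b : ℝ} (hpa0 : 0 ≤ p_a)
    (hpa1 : p_a ≤ 1) (hpb0 : 0 ≤ p_b) (hpb1 : p_b ≤ 1) {Y₁ Y₂ : Ω → ℕ} {ε : Ω → ℝ}
    (hY₁ : Measurable Y₁) (hY₂ : Measurable Y₂) (hε : Measurable ε)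
    (hεval : ∀ ω, ε ω = 1 ∨ ε ω = -1) (hindep12 : IndepFun Y₁ Y₂ μ)
    (hindepε : IndepFun (fun ω => (Y₁ ω, Y₂ ω)) ε μ)
    (hlaw₁ : ∀ i : ℕ, μ {ω | Y₁ ω = i} =
      ENNReal.ofReal ((n.choose i : ℝ) * p_a ^ i * (1 - p_a) ^ (n - i)))
    (hlaw₂ : ∀ i : ℕ, μ {ω | Y₂ ω = i} =
      ENNReal.ofReal ((n.choose i : ℝ) * p_b ^ i * (1 - p_b) ^ (n - i))) (t : ℝ) :
    ∫⁻ ω, ENNReal.ofReal (Real.exp (t * (ε ω * ((Y₁ ω : ℝ) - Y₂ ω)))) ∂μ =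
      μ {ω | ε ω = 1} * ENNReal.ofReal
          (((p_a * Real.exp t + (1 - p_a)) * (p_b * Real.exp (-t) + (1 - p_b))) ^ n) +
        μ {ω | ε ω = -1} * ENNReal.ofReal
          (((p_a * Real.exp (-t) + (1 - p_a)) * (p_b * Real.exp t + (1 - p_b))) ^ n) := by
  have hneg : ∀ x : ℝ, t * -x = -t * x := fun x => by ring
  have hM : ∀ u, 0 ≤ (p_a * Real.exp u + (1 - p_a)) ^ n := fun u =>
    pow_nonneg (add_nonneg (mul_nonneg hpa0 (Real.exp_nonneg u)) (sub_nonneg.2 hpa1)) n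
  have hind : IndepFun (fun ω => (Y₁ ω : ℝ)) (fun ω => (Y₂ ω : ℝ)) μ :=
    hindep12.comp measurable_from_nat measurable_from_nat
  have hindε : IndepFun (fun ω => (Y₁ ω : ℝ) - Y₂ ω) ε μ :=
    hindepε.comp (φ := fun k : ℕ × ℕ => (k.1 : ℝ) - k.2) (by fun_prop) measurable_id
  rw [lintegral_comp_sign_mul_of_indepFun (by fun_prop) hε hεval hindε
    (G := fun x => ENNReal.ofReal (Real.exp (t * x))) (by fun_prop)]
  simp only [hneg]
  simp only [lintegral_exp_mul_sub_of_indepFun (by fun_prop) (by fun_prop) hind,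
    lintegral_exp_mul_of_binomial hY₁ hpa0 hpa1 hlaw₁,
    lintegral_exp_mul_of_binomial hY₂ hpb0 hpb1 hlaw₂]
  rw [neg_neg, mul_pow, mul_pow, ENNReal.ofReal_mul (hM t), ENNReal.ofReal_mul (hM (-t))]

end Probability

theorem mul_inv_add_mul_mul_add_of_sq_eq {pa qa pb qb r : ℝ} (hpa : 0 < pa) (hqa : 0 < qa)
    (hpb : 0 < pb) (hqb : 0 < qb) (hr : 0 < r) (hr2 : r ^ 2 = pa * qb / (qa * pb)) :
    (pa * r⁻¹ + qa) * (pb * r + qb) = (√(pa * pb) + √(qa * qb)) ^ 2 := by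
  have hcross : √(pa * pb) * √(qa * qb) = qa * pb * r := by
    rw [← Real.sqrt_mul (by positivity), Real.sqrt_eq_iff_mul_self_eq_of_pos (by positivity),
      show qa * pb * r * (qa * pb * r) = (qa * pb) ^ 2 * r ^ 2 by ring, hr2]
    field_simp
  have hbalance : pa * qb = qa * pb * r ^ 2 := by rw [hr2]; field_simp
  rw [add_sq, Real.sq_sqrt (by positivity), Real.sq_sqrt (by positivity), mul_assoc 2, hcross]
  field_simp
  linear_combination hbalance

theorem mul_add_mul_mul_inv_add_of_sq_eq {pa qa pb qb r : ℝ} (hpa : 0 < pa) (hqa : 0 < qa)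
    (hpb : 0 < pb) (hqb : 0 < qb) (hr : 0 < r) (hr2 : r ^ 2 = pa * qb / (qa * pb)) :
    (pa * r + qa) * (pb * r⁻¹ + qb) =
      √(qa ^ 3 * pb ^ 3 / (pa * qb)) + √(pa ^ 3 * qb ^ 3 / (qa * pb)) + qa * qb + pa * pb := by
  have h₁ : √(qa ^ 3 * pb ^ 3 / (pa * qb)) = qa * pb / r := by
    rw [Real.sqrt_eq_iff_mul_self_eq_of_pos (by positivity),
      show qa * pb / r * (qa * pb / r) = (qa * pb) ^ 2 / r ^ 2 by ring, hr2]
    field_simp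
  have h₂ : √(pa ^ 3 * qb ^ 3 / (qa * pb)) = pa * qb * r := by
    rw [Real.sqrt_eq_iff_mul_self_eq_of_pos (by positivity),
      show pa * qb * r * (pa * qb * r) = (pa * qb) ^ 2 * r ^ 2 by ring, hr2]
    field_simp
  rw [h₁, h₂]
  field_simp
  ring

theorem chernoff_tail_symmetrized_binomial_difference_general {Ω : Type*} [MeasurableSpace Ω]
    (μ : Measure Ω)
    (n : ℕ) (p_a p_b : ℝ) (hpb0 : 0 < p_b) (hpba : p_b < p_a) (hpa1 : p_a < 1)
    (Y₁ Y₂ : Ω → ℕ) (ε : Ω → ℝ)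
    (hY₁ : Measurable Y₁) (hY₂ : Measurable Y₂) (hε : Measurable ε)
    (hεval : ∀ ω, ε ω = 1 ∨ ε ω = -1)
    (hεlaw : μ {ω | ε ω = 1} = 1/2 ∧ μ {ω | ε ω = -1} = 1/2)
    (hindep12 : IndepFun Y₁ Y₂ μ)
    (hindepε : IndepFun (fun ω => (Y₁ ω, Y₂ ω)) ε μ)
    (hlaw₁ : ∀ i : ℕ, μ {ω | Y₁ ω = i} =
      ENNReal.ofReal ((n.choose i : ℝ) * p_a ^ i * (1 - p_a) ^ (n - i)))
    (hlaw₂ : ∀ i : ℕ, μ {ω | Y₂ ω = i} =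
      ENNReal.ofReal ((n.choose i : ℝ) * p_b ^ i * (1 - p_b) ^ (n - i)))
    (q_a q_b tstar C : ℝ) (hqa : q_a = 1 - p_a) (hqb : q_b = 1 - p_b)
    (htstar : tstar = (1/2) * Real.log ((p_a * q_b) / (q_a * p_b)))
    (hC : C = (1/2) * (Real.sqrt (p_a * p_b) + Real.sqrt (q_a * q_b)) ^ (2*n) +
        (1/2) * (Real.sqrt (q_a^3 * p_b^3 / (p_a * q_b)) +
          Real.sqrt (p_a^3 * q_b^3 / (q_a * p_b)) + q_a * q_b + p_a * p_b) ^ n)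
    (s : ℝ) :
    μ {ω | s ≤ ε ω * ((Y₁ ω : ℝ) - (Y₂ ω : ℝ))} ≤
      ENNReal.ofReal (C * Real.exp (-(s * tstar))) := by
  have hpa0 : 0 < p_a := hpb0.trans hpba
  have hqa0 : 0 < q_a := by linarith
  have hqb0 : 0 < q_b := by linarith
  have hratio : 1 < p_a * q_b / (q_a * p_b) := by
    rw [one_lt_div (by positivity), hqa, hqb]; nlinarith
  have htstar0 : 0 ≤ tstar := by rw [htstar]; have := Real.log_pos hratio; positivity
  have hexp_sq : Real.exp tstar ^ 2 = p_a * q_b / (q_a * p_b) := by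
    rw [← Real.exp_nat_mul, htstar, Nat.cast_ofNat, ← mul_assoc, mul_one_div_cancel two_ne_zero,
      one_mul, Real.exp_log (by positivity)]
  have hmgf : ∫⁻ ω, ENNReal.ofReal (Real.exp (tstar * (ε ω * ((Y₁ ω : ℝ) - Y₂ ω)))) ∂μ =
      ENNReal.ofReal C := by
    rw [lintegral_exp_mul_sign_mul_sub_of_binomial hpa0.le hpa1.le hpb0.le (by linarith) hY₁ hY₂
      hε hεval hindep12 hindepε hlaw₁ hlaw₂, hεlaw.1, hεlaw.2, ← hqa, ← hqb, Real.exp_neg,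
      mul_add_mul_mul_inv_add_of_sq_eq hpa0 hqa0 hpb0 hqb0 (Real.exp_pos _) hexp_sq,
      mul_inv_add_mul_mul_add_of_sq_eq hpa0 hqa0 hpb0 hqb0 (Real.exp_pos _) hexp_sq, ← pow_mul,
      hC, ← ENNReal.ofReal_ofNat 2, ← ENNReal.ofReal_one, ← ENNReal.ofReal_div_of_pos two_pos,
      ← ENNReal.ofReal_mul (by positivity), ← ENNReal.ofReal_mul (by positivity),
      ← ENNReal.ofReal_add (by positivity) (by positivity), add_comm]
  calc μ {ω | s ≤ ε ω * ((Y₁ ω : ℝ) - (Y₂ ω : ℝ))}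
      ≤ ENNReal.ofReal (Real.exp (-(s * tstar))) *
          ∫⁻ ω, ENNReal.ofReal (Real.exp (tstar * (ε ω * ((Y₁ ω : ℝ) - Y₂ ω)))) ∂μ :=
        measure_ge_le_exp_mul_lintegral_exp (by fun_prop) htstar0 s
    _ = ENNReal.ofReal (C * Real.exp (-(s * tstar))) := by
        rw [hmgf, ← ENNReal.ofReal_mul (Real.exp_pos _).le, mul_comm]

/-- Chernoff tail bound for the symmetrized binomial difference: with `Y₁ ~ Bin(n, p_a)`,
`Y₂ ~ Bin(n, p_b)` and `ε` uniform on `{-1, +1}` mutually independent,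
`X = ε·(Y₁ - Y₂)` satisfies `P(X ≥ s) ≤ C·e^{-s t*}` for every real `s`, where
`t* = ½ ln(p_a q_b / (q_a p_b))` and `C` is the explicit concentration constant. -/
theorem chernoff_tail_symmetrized_binomial_difference {Ω : Type*} [MeasurableSpace Ω]
    (μ : Measure Ω) [IsProbabilityMeasure μ]
    (n : ℕ) (p_a p_b : ℝ) (hpb0 : 0 < p_b) (hpba : p_b < p_a) (hpa1 : p_a < 1)
    (Y₁ Y₂ : Ω → ℕ) (ε : Ω → ℝ)
    (hY₁ : Measurable Y₁) (hY₂ : Measurable Y₂) (hε : Measurable ε)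
    (hεval : ∀ ω, ε ω = 1 ∨ ε ω = -1)
    (hεlaw : μ {ω | ε ω = 1} = 1/2 ∧ μ {ω | ε ω = -1} = 1/2)
    (hindep12 : IndepFun Y₁ Y₂ μ)
    (hindepε : IndepFun (fun ω => (Y₁ ω, Y₂ ω)) ε μ)
    (hlaw₁ : ∀ i : ℕ, μ {ω | Y₁ ω = i} =
      ENNReal.ofReal ((n.choose i : ℝ) * p_a ^ i * (1 - p_a) ^ (n - i)))
    (hlaw₂ : ∀ i : ℕ, μ {ω | Y₂ ω = i} =
      ENNReal.ofReal ((n.choose i : ℝ) * p_b ^ i * (1 - p_b) ^ (n - i)))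
    (q_a q_b tstar C : ℝ) (hqa : q_a = 1 - p_a) (hqb : q_b = 1 - p_b)
    (htstar : tstar = (1/2) * Real.log ((p_a * q_b) / (q_a * p_b)))
    (hC : C = (1/2) * (Real.sqrt (p_a * p_b) + Real.sqrt (q_a * q_b)) ^ (2*n) +
        (1/2) * (Real.sqrt (q_a^3 * p_b^3 / (p_a * q_b)) +
          Real.sqrt (p_a^3 * q_b^3 / (q_a * p_b)) + q_a * q_b + p_a * p_b) ^ n)
    (s : ℝ) :
    μ {ω | s ≤ ε ω * ((Y₁ ω : ℝ) - (Y₂ ω : ℝ))} ≤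
      ENNReal.ofReal (C * Real.exp (-(s * tstar))) :=
  chernoff_tail_symmetrized_binomial_difference_general μ n p_a p_b hpb0 hpba hpa1 Y₁ Y₂ ε hY₁ hY₂
    hε hεval hεlaw hindep12 hindepε hlaw₁ hlaw₂ q_a q_b tstar C hqa hqb htstar hC s
end

section
/- Let n ≥ 1 be an integer and let v ∈ ℝ^{2n} be a unit vector with ⟨u2, v⟩ ≥ 0, where u2 is the unit vector with coordinates 1/√(2n) on V1 = {1,...,n} and −1/√(2n) on V2 = {n+1,...,2n}. Let V1' ⊆ {1,...,2n} be any set of n indices such that v_i ≥ v_j for every i ∈ V1' and j ∉ V1', and let V2' be its complement. Then the partition (V1', V2') is γ-correct for γ = (4/3)·(1 − ⟨u2, v⟩²) = (4/3)·sin²∠(u2, v); that is, |V1 ∩ V1'| ≥ n − (4/3)·n·(1 − ⟨u2, v⟩²) and |V2 ∩ V2'| ≥ n − (4/3)·n·(1 − ⟨u2, v⟩²). -/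
/-!
Let `A` be the first half of the indices and `S = V1'`, so that
`√(2n) ⟪u2, v⟫ = ∑_A v - ∑_Aᶜ v`. The sets `A \ S` and `S \ A` have the same size and every
entry of `v` on `S \ A` dominates every entry on `A \ S`, so dropping both from that difference
only increases it. What is left, `∑_{A ∩ S} v - ∑_{Aᶜ ∩ Sᶜ} v`, is at most `√(2m) ‖v‖` by
Cauchy–Schwarz, where `m = #(A ∩ S) = #(Aᶜ ∩ Sᶜ)`. Hence `m ≥ n ⟪u2, v⟫²`, which is stronger
than the bound with the constant `4/3`.
-/

open Finset
open scoped RealInnerProductSpace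

namespace Finset

variable {ι M : Type*}

theorem sum_le_sum_of_card_eq_of_forall_le [AddCommMonoid M] [LinearOrder M] [AddLeftMono M]
    {s t : Finset ι} (f : ι → M) (hst : #s = #t) (h : ∀ i ∈ s, ∀ j ∈ t, f i ≤ f j) :
    ∑ i ∈ s, f i ≤ ∑ j ∈ t, f j := by
  obtain rfl | ht := t.eq_empty_or_nonempty
  · rw [card_empty, card_eq_zero] at hst
    simp [hst]
  · calc ∑ i ∈ s, f i ≤ #s • t.inf' ht f :=
          sum_le_card_nsmul s f _ fun i hi => le_inf' ht f (h i hi)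
      _ = #t • t.inf' ht f := by rw [hst]
      _ ≤ ∑ j ∈ t, f j := card_nsmul_le_sum t f _ fun j hj => inf'_le f hj

variable [Fintype ι] [DecidableEq ι]

theorem card_compl_inter_compl_eq_card_inter {A S : Finset ι}
    (h : #A + #S = Fintype.card ι) : #(Aᶜ ∩ Sᶜ) = #(A ∩ S) := by
  have := card_union_add_card_inter A S
  have := card_le_univ (A ∪ S)
  rw [← compl_union, card_compl]
  omega

theorem sum_sub_sum_compl_le_inter_of_top {A S : Finset ι} (v : ι → ℝ) (hAS : #A = #S)
    (hS : ∀ i ∈ S, ∀ j ∉ S, v j ≤ v i) :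
    ∑ i ∈ A, v i - ∑ i ∈ Aᶜ, v i ≤ ∑ i ∈ A ∩ S, v i - ∑ i ∈ Aᶜ ∩ Sᶜ, v i := by
  have hexchange : ∑ i ∈ A \ S, v i ≤ ∑ i ∈ S \ A, v i :=
    sum_le_sum_of_card_eq_of_forall_le v (card_sdiff_comm hAS) fun i hi j hj =>
      hS j (mem_sdiff.1 hj).1 i (mem_sdiff.1 hi).2
  rw [← sum_inter_add_sum_sdiff A S v, ← sum_inter_add_sum_sdiff Aᶜ Sᶜ v, compl_sdiff_compl]
  linarith

end Finset

namespace EuclideanSpace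

variable {ι : Type*} [Fintype ι]

theorem sum_abs_le_sqrt_card_mul_norm (v : EuclideanSpace ℝ ι) (s : Finset ι) :
    ∑ i ∈ s, |v i| ≤ √(#s) * ‖v‖ := by
  have hsq : (∑ i ∈ s, |v i|) ^ 2 ≤ #s * ‖v‖ ^ 2 :=
    calc (∑ i ∈ s, |v i|) ^ 2 ≤ #s * ∑ i ∈ s, |v i| ^ 2 := sq_sum_le_card_mul_sum_sq
      _ ≤ #s * ‖v‖ ^ 2 := by
        rw [real_norm_sq_eq]
        simp only [sq_abs]
        exact mul_le_mul_of_nonneg_left (sum_le_sum_of_subset_of_nonneg (subset_univ s)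
          fun i _ _ => sq_nonneg (v i)) (Nat.cast_nonneg _)
  calc ∑ i ∈ s, |v i| ≤ √(#s * ‖v‖ ^ 2) := (le_abs_self _).trans (Real.abs_le_sqrt hsq)
    _ = √(#s) * ‖v‖ := by rw [Real.sqrt_mul (by positivity), Real.sqrt_sq (norm_nonneg v)]

theorem sum_sub_sum_le_sqrt_card_mul_norm [DecidableEq ι] (v : EuclideanSpace ℝ ι)
    {D E : Finset ι} (hDE : Disjoint D E) :
    ∑ i ∈ D, v i - ∑ i ∈ E, v i ≤ √(#D + #E) * ‖v‖ :=
  calc ∑ i ∈ D, v i - ∑ i ∈ E, v i ≤ ∑ i ∈ D ∪ E, |v i| := by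
        rw [sum_union hDE, sub_eq_add_neg, ← sum_neg_distrib]
        exact add_le_add (sum_le_sum fun i _ => le_abs_self _)
          (sum_le_sum fun i _ => neg_le_abs _)
    _ ≤ √(#D + #E) * ‖v‖ := by
        simpa [card_union_of_disjoint hDE] using sum_abs_le_sqrt_card_mul_norm v (D ∪ E)

theorem inner_eq_mul_sum_sub_sum_compl [DecidableEq ι] {u v : EuclideanSpace ℝ ι} {a : ℝ}
    (A : Finset ι) (hu : ∀ i, u i = if i ∈ A then a else -a) :
    ⟪u, v⟫ = a * (∑ i ∈ A, v i - ∑ i ∈ Aᶜ, v i) := by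
  simp only [PiLp.inner_apply, RCLike.inner_apply, conj_trivial, hu]
  rw [← sum_add_sum_compl A]
  simp only [mul_sub, mul_sum]
  rw [sub_eq_add_neg, ← sum_neg_distrib]
  congr 1 <;> refine sum_congr rfl fun i hi => ?_
  · simp [hi, mul_comm]
  · simp [mem_compl.1 hi, mul_comm]

end EuclideanSpace

/-- Chin et al.'s error bound for the sorting step: if `v` is a unit vector with
`⟨u2, v⟩ ≥ 0` and `V1'` consists of the indices of the `n` largest entries of `v`, then the
partition `(V1', V1'ᶜ)` is `γ`-correct for `γ = (4/3)·(1 - ⟨u2, v⟩²) = (4/3)·sin²∠(u2, v)`. -/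
theorem spectral_partition_gamma_correct (n : ℕ) (hn : 1 ≤ n)
    (v u2 : EuclideanSpace ℝ (Fin (2*n)))
    (hu2 : ∀ i : Fin (2*n), u2 i =
      if (i : ℕ) < n then 1 / Real.sqrt (2*n) else -(1 / Real.sqrt (2*n)))
    (hv : ‖v‖ = 1) (hpos : 0 ≤ ⟪u2, v⟫)
    (V1' : Finset (Fin (2*n))) (hcard : V1'.card = n)
    (hsorted : ∀ i ∈ V1', ∀ j ∉ V1', v j ≤ v i) :
    (n : ℝ) - (4/3) * (n : ℝ) * (1 - ⟪u2, v⟫^2) ≤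
        ((Finset.univ.filter (fun i : Fin (2*n) => (i : ℕ) < n) ∩ V1').card : ℝ) ∧
      (n : ℝ) - (4/3) * (n : ℝ) * (1 - ⟪u2, v⟫^2) ≤
        ((Finset.univ.filter (fun i : Fin (2*n) => ¬ (i : ℕ) < n) ∩ V1'ᶜ).card : ℝ) := by
  set A : Finset (Fin (2*n)) := univ.filter fun i => (i : ℕ) < n
  have hA : #A = n := Fin.card_filter_val_lt.trans (by omega)
  have hAc : univ.filter (fun i : Fin (2*n) => ¬ (i : ℕ) < n) = Aᶜ := (compl_filter _).symm
  set m := #(A ∩ V1')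
  have hm : #(Aᶜ ∩ V1'ᶜ) = m :=
    card_compl_inter_compl_eq_card_inter (by rw [hA, hcard, Fintype.card_fin]; omega)
  have hmn : (m : ℝ) ≤ n := by exact_mod_cast hA ▸ card_le_card inter_subset_left
  have hbound : √(2 * n) * ⟪u2, v⟫ ≤ √(2 * m) :=
    calc √(2 * n) * ⟪u2, v⟫ = ∑ i ∈ A, v i - ∑ i ∈ Aᶜ, v i := by
          have : √(2 * n) ≠ 0 := by positivity
          rw [EuclideanSpace.inner_eq_mul_sum_sub_sum_compl A (a := 1 / √(2 * n))
              (by simpa only [A, mem_filter, mem_univ, true_and] using hu2),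
            ← mul_assoc, mul_one_div_cancel this, one_mul]
      _ ≤ ∑ i ∈ A ∩ V1', v i - ∑ i ∈ Aᶜ ∩ V1'ᶜ, v i :=
          sum_sub_sum_compl_le_inter_of_top v (hA.trans hcard.symm) hsorted
      _ ≤ √(#(A ∩ V1') + #(Aᶜ ∩ V1'ᶜ)) * ‖v‖ :=
          EuclideanSpace.sum_sub_sum_le_sqrt_card_mul_norm v
            (disjoint_compl_right.mono inter_subset_right inter_subset_right)
      _ = √(2 * m) := by rw [hm, hv, mul_one, ← two_mul]
  have hkey : n * ⟪u2, v⟫ ^ 2 ≤ m := by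
    have := pow_le_pow_left₀ (by positivity) hbound 2
    rw [mul_pow, Real.sq_sqrt (by positivity), Real.sq_sqrt (by positivity)] at this
    linarith
  rw [hAc, hm]
  constructor <;> nlinarith
end
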